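/- Let σ be a locally finite positive Borel measure on ℝ, I₀ a dyadic interval with σ(I₀) > 0, and f ∈ L²(σ) supported on I₀. Define the stopping collection ℱ ⊂ 𝒟 recursively: I₀ ∈ ℱ, and for each F ∈ ℱ, every maximal dyadic interval F' ⊊ F with 𝔼^σ_{F'}|f| > 4·𝔼^σ_F|f| belongs to ℱ. Then Σ_{F∈ℱ} (𝔼^σ_F|f|)² σ(F) ≤ C‖f‖²_{L²(σ)} for an absolute constant C. -/

import Mathlib

open MeasureTheory Set
open scoped ENNReal NNReal

noncomputable section

namespace TwoWeight

/-- Truncated Hilbert transform `H_{e,d}(f σ)(x) = ∫_{e<|x-y|<d} f(y)/(y-x) dσ(y)`. -/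
def Htr (σ : Measure ℝ) (f : ℝ → ℝ) (e d : ℝ) (x : ℝ) : ℝ :=
  ∫ y in {y : ℝ | e < |x - y| ∧ |x - y| < d}, f y / (y - x) ∂σ

/-- Poisson integral `P(μ, I)` for the interval `I = [a,b]`. -/
def Poisson (μ : Measure ℝ) (a b : ℝ) : ℝ≥0∞ :=
  ∫⁻ x, ENNReal.ofReal ((b - a) / ((b - a) ^ 2 + (Metric.infDist x (Icc a b)) ^ 2)) ∂μ

/-- The Poisson `A₂` condition with constant `A`, over all intervals. -/
def A2Cond (σ w : Measure ℝ) (A : ℝ) : Prop :=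
  ∀ a b : ℝ, a < b → Poisson σ a b * Poisson w a b ≤ ENNReal.ofReal A

/-- The two interval testing conditions with constant `T`, uniformly over truncations. -/
def Testing (σ w : Measure ℝ) (T : ℝ) : Prop :=
  ∀ a b : ℝ, a < b → ∀ e d : ℝ, 0 < e → e < d →
    (∫⁻ x in Icc a b, ENNReal.ofReal ((Htr σ ((Icc a b).indicator 1) e d x) ^ 2) ∂w
        ≤ ENNReal.ofReal (T ^ 2) * σ (Icc a b)) ∧
    (∫⁻ x in Icc a b, ENNReal.ofReal ((Htr w ((Icc a b).indicator 1) e d x) ^ 2) ∂σ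
        ≤ ENNReal.ofReal (T ^ 2) * w (Icc a b))

/-- A dyadic interval `[2^k n, 2^k(n+1))` of the standard dyadic grid. -/
structure DI where
  k : ℤ
  n : ℤ

namespace DI
/-- left endpoint -/
def left (I : DI) : ℝ := (2 : ℝ) ^ I.k * (I.n : ℝ)
/-- right endpoint -/
def right (I : DI) : ℝ := (2 : ℝ) ^ I.k * ((I.n : ℝ) + 1)
/-- the underlying set -/
def set (I : DI) : Set ℝ := Ico I.left I.right
/-- length -/
def len (I : DI) : ℝ := (2 : ℝ) ^ I.k
/-- left child -/
def lc (I : DI) : DI := ⟨I.k - 1, 2 * I.n⟩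
/-- right child -/
def rc (I : DI) : DI := ⟨I.k - 1, 2 * I.n + 1⟩
end DI

/-- `J ⋐ I` : `J ⊆ I` and `2^r |J| ≤ |I|`. -/
def csub (r : ℕ) (J I : DI) : Prop := J.set ⊆ I.set ∧ (2 : ℝ) ^ r * J.len ≤ I.len

/-- Distance of a subinterval `K ⊆ J` to the boundary of `J`. -/
def bdist (K J : DI) : ℝ := min (K.left - J.left) (J.right - K.right)

/-- Goodness of a dyadic interval, with parameters `r`, `eps`. -/
def Good (r : ℕ) (eps : ℝ) (I : DI) : Prop :=
  ∀ J : DI, I.set ⊆ J.set → (2 : ℝ) ^ ((r : ℤ) - 1) * I.len ≤ J.len →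
    I.len ^ eps * J.len ^ (1 - eps) ≤ bdist I.lc J ∧
    I.len ^ eps * J.len ^ (1 - eps) ≤ bdist I.rc J

/-- `σ`-average `𝔼^σ_I f` of `f` over `I`. -/
def avg (σ : Measure ℝ) (I : DI) (f : ℝ → ℝ) : ℝ :=
  (σ I.set).toReal⁻¹ * ∫ x in I.set, f x ∂σ

/-- Martingale difference `Δ^σ_I f`. -/
def mdiff (σ : Measure ℝ) (I : DI) (f : ℝ → ℝ) : ℝ → ℝ := fun x =>
  (I.lc.set.indicator (fun _ => avg σ I.lc f) x + I.rc.set.indicator (fun _ => avg σ I.rc f) x)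
    - I.set.indicator (fun _ => avg σ I f) x

/-- `L²(w)`-normalized Haar function `h^w_J`. -/
def haar (w : Measure ℝ) (J : DI) : ℝ → ℝ := fun x =>
  J.lc.set.indicator (fun _ =>
      Real.sqrt ((w J.rc.set).toReal / ((w J.lc.set).toReal * (w J.set).toReal))) x
    - J.rc.set.indicator (fun _ =>
      Real.sqrt ((w J.lc.set).toReal / ((w J.rc.set).toReal * (w J.set).toReal))) x

/-- `⟨x, h^w_J⟩_{L²(w)}`. -/
def haarX (w : Measure ℝ) (J : DI) : ℝ := ∫ x, x * haar w J x ∂w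

/-- Energy `E(w,J)²`. -/
def energySq (w : Measure ℝ) (J : DI) : ℝ :=
  (w J.set).toReal⁻¹ * ∫ x in J.set, ((x - avg w J id) / J.len) ^ 2 ∂w

/-- Poisson integral, as a real number, of a measure relative to a dyadic interval. -/
def PoissonR (μ : Measure ℝ) (I : DI) : ℝ := (Poisson μ I.left I.right).toReal

/-- The energy stopping inequality `P(σ1_{I₀},I)² E(w,I)² w(I) > 10 C₀ 𝓗² σ(I)`. -/
def EnergyBad (σ w : Measure ℝ) (C₀ H : ℝ) (I₀ I : DI) : Prop :=
  10 * C₀ * H ^ 2 * (σ I.set).toReal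
    < (PoissonR (σ.restrict I₀.set) I) ^ 2 * energySq w I * (w I.set).toReal

/-- `ℱ_energy(I₀)` : maximal dyadic intervals `I ⊊ I₀` satisfying `EnergyBad`. -/
def FEnergy (σ w : Measure ℝ) (C₀ H : ℝ) (I₀ : DI) : Set DI :=
  {I | I.set ⊂ I₀.set ∧ EnergyBad σ w C₀ H I₀ I ∧
    ∀ I' : DI, I'.set ⊂ I₀.set → EnergyBad σ w C₀ H I₀ I' → I.set ⊆ I'.set → I' = I}

/-- The child of `I` containing `J` (for `J` contained in a child of `I`). -/
def cc (I J : DI) : DI :=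
  @ite _ (J.set ⊆ I.lc.set) (Classical.propDecidable _) I.lc I.rc

/-- `𝔼^σ_J Δ^σ_I f` for `J ⋐ I` : the constant value of `Δ^σ_I f` on the child of `I`
containing `J`. -/
def coef (σ : Measure ℝ) (f : ℝ → ℝ) (I J : DI) : ℝ := avg σ (cc I J) f - avg σ I f

/-- `𝒬₂` : the second coordinates of a collection of pairs. -/
def coll2 (Q : Set (DI × DI)) : Set DI := {J | ∃ p ∈ Q, p.2 = J}

/-- `𝒬̃₁` : the intervals `(Q₁)_{Q₂}` of a collection of pairs. -/
def tcoll1 (Q : Set (DI × DI)) : Set DI := {K | ∃ p ∈ Q, cc p.1 p.2 = K}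

/-- Admissible collection of pairs relative to `I₀`. -/
def Admissible (σ w : Measure ℝ) (C₀ H : ℝ) (r : ℕ) (eps : ℝ) (I₀ : DI)
    (Q : Set (DI × DI)) : Prop :=
  (∀ p ∈ Q, csub r p.2 p.1 ∧ p.1.set ⊆ I₀.set ∧ Good r eps p.1) ∧
  (∀ p ∈ Q, ∀ p' ∈ Q, p'.2 = p.2 → ∀ I : DI, p'.1.set ⊆ I.set → I.set ⊆ p.1.set →
      Good r eps I → (I, p.2) ∈ Q) ∧
  (∀ p ∈ Q, ∀ F ∈ FEnergy σ w C₀ H I₀, ¬ (cc p.1 p.2).set ⊆ F.set ∧ ¬ p.2.set ⊆ F.set)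

/-- `Σ_{J ∈ 𝒬₂, J ⊆ K} ⟨x, h^w_J⟩²`. -/
def haarSum (w : Measure ℝ) (Q : Set (DI × DI)) (K : DI) : ℝ :=
  ∑' J : {J : DI // J ∈ coll2 Q ∧ J.set ⊆ K.set}, (haarX w J.1) ^ 2

/-- `size(𝒬) ≤ τ`. -/
def SizeBound (σ w : Measure ℝ) (I₀ : DI) (Q : Set (DI × DI)) (τ : ℝ) : Prop :=
  ∀ K ∈ tcoll1 Q ∪ coll2 Q,
    (PoissonR (σ.restrict (I₀.set \ K.set)) K) ^ 2 * haarSum w Q K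
      ≤ τ ^ 2 * ((σ K.set).toReal * K.len ^ 2)

/-- The bilinear form `B_𝒬(f,g)` (with truncation parameters `e < d`). -/
def BQ (σ w : Measure ℝ) (I₀ : DI) (Q : Set (DI × DI)) (e d : ℝ) (f g : ℝ → ℝ) : ℝ :=
  ∑' p : Q, coef σ f p.1.1 p.1.2
    * ∫ x, Htr σ ((I₀.set \ (cc p.1.1 p.1.2).set).indicator 1) e d x * mdiff w p.1.2 g x ∂w

/-- The bilinear form `B^{above}(f,g)`. -/
def BAbove (σ w : Measure ℝ) (r : ℕ) (I₀ : DI) (e d : ℝ) (f g : ℝ → ℝ) : ℝ :=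
  ∑' p : {p : DI × DI // p.1.set ⊆ I₀.set ∧ csub r p.2 p.1},
    coef σ f p.1.1 p.1.2
      * ∫ x, Htr σ ((cc p.1.1 p.1.2).set.indicator 1) e d x * mdiff w p.1.2 g x ∂w

/-- The stopping form `B^{stop}_{I₀}(f,g)`. -/
def BStop (σ w : Measure ℝ) (r : ℕ) (I₀ : DI) (e d : ℝ) (f g : ℝ → ℝ) : ℝ :=
  ∑' p : {p : DI × DI // p.1.set ⊆ I₀.set ∧ csub r p.2 p.1},
    coef σ f p.1.1 p.1.2
      * ∫ x, Htr σ ((I₀.set \ (cc p.1.1 p.1.2).set).indicator 1) e d x * mdiff w p.1.2 g x ∂w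

/-- The form with argument `H_σ 1_{I₀}`. -/
def BTop (σ w : Measure ℝ) (r : ℕ) (I₀ : DI) (e d : ℝ) (f g : ℝ → ℝ) : ℝ :=
  ∑' p : {p : DI × DI // p.1.set ⊆ I₀.set ∧ csub r p.2 p.1},
    coef σ f p.1.1 p.1.2
      * ∫ x, Htr σ (I₀.set.indicator 1) e d x * mdiff w p.1.2 g x ∂w

/-- A maximal dyadic interval `F' ⊊ F` with `𝔼^σ_{F'}|f| > 4 𝔼^σ_F|f|`. -/
def StopChild (sg : Measure ℝ) (f : ℝ → ℝ) (F F' : DI) : Prop :=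
  F'.set ⊂ F.set ∧ 4 * avg sg F (fun x => |f x|) < avg sg F' (fun x => |f x|) ∧
  ∀ F'' : DI, F'.set ⊆ F''.set → F''.set ⊂ F.set →
    4 * avg sg F (fun x => |f x|) < avg sg F'' (fun x => |f x|) → F'' = F'

/-- The stopping collection `ℱ` generated from `I₀` by the stopping children rule. -/
def StopColl (sg : Measure ℝ) (f : ℝ → ℝ) (I₀ : DI) : Set DI :=
  {F | ∃ n : ℕ, ∃ c : ℕ → DI, c 0 = I₀ ∧ c n = F ∧
    ∀ i < n, StopChild sg f (c i) (c (i + 1))}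

end TwoWeight

/-!
Write `a F = 𝔼^σ_F |f|`. A stopping child has average more than four times that of its parent,
so the averages of the members of `ℱ` containing a given `F` decay geometrically up the tree
and sum to at most `(4/3) a F`. With `H = ∑_F a F 𝟙_F` one has `∑_F (a F)² σ(F) = ∫ H |f| dσ`;
since `ℱ` is laminar, expanding `‖H‖₂²` over pairs of nested intervals and using the ancestor
bound gives `‖H‖₂² ≤ (8/3) ∑_F (a F)² σ(F)`, and Cauchy–Schwarz yields the theorem with `C = 8/3`.
-/

section Laminar

variable {α ι : Type*} [MeasurableSpace α] {μ : Measure α}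

theorem ENNReal.sq_lintegral_mul_le {f g : α → ℝ≥0∞} (hf : AEMeasurable f μ)
    (hg : AEMeasurable g μ) :
    (∫⁻ x, f x * g x ∂μ) ^ 2 ≤ (∫⁻ x, f x ^ 2 ∂μ) * ∫⁻ x, g x ^ 2 ∂μ := by
  have h := ENNReal.lintegral_mul_le_Lp_mul_Lq μ Real.HolderConjugate.two_two hf hg
  simp only [ENNReal.rpow_two] at h
  calc (∫⁻ x, f x * g x ∂μ) ^ 2
      ≤ ((∫⁻ x, f x ^ 2 ∂μ) ^ (1 / 2 : ℝ) * (∫⁻ x, g x ^ 2 ∂μ) ^ (1 / 2 : ℝ)) ^ 2 := by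
        gcongr; exact h
    _ = (∫⁻ x, f x ^ 2 ∂μ) * ∫⁻ x, g x ^ 2 ∂μ := by
        rw [mul_pow, ← ENNReal.rpow_natCast, ← ENNReal.rpow_natCast, ← ENNReal.rpow_mul,
          ← ENNReal.rpow_mul]
        norm_num

theorem ENNReal.le_mul_of_sq_le_mul {T A L M : ℝ≥0∞} (hT : T ≠ ∞) (hTA : T ^ 2 ≤ A * L)
    (hA : A ≤ M * T) : T ≤ M * L := by
  rcases eq_or_ne T 0 with rfl | hT₀
  · exact zero_le
  refine (ENNReal.mul_le_mul_iff_left hT₀ hT).1 ?_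
  calc T * T = T ^ 2 := (sq T).symm
    _ ≤ M * T * L := hTA.trans (mul_le_mul_left hA L)
    _ = M * L * T := by ring

variable {t : Finset ι} {E : ι → Set α} {c : ι → ℝ≥0∞} {K : ℝ≥0∞}

open scoped Classical in
theorem mul_measure_inter_le_of_laminar (i j : ι)
    (h : (E i ∩ E j).Nonempty → E i ⊆ E j ∨ E j ⊆ E i) :
    c i * c j * μ (E i ∩ E j) ≤ (if E i ⊆ E j then c i * μ (E i) * c j else 0)
        + if E j ⊆ E i then c j * μ (E j) * c i else 0 := by
  rcases (E i ∩ E j).eq_empty_or_nonempty with he | hne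
  · simp [he]
  rcases h hne with hij | hji
  · calc c i * c j * μ (E i ∩ E j) ≤ c i * μ (E i) * c j := by
          rw [mul_right_comm]; gcongr; exact inter_subset_left
      _ ≤ _ := by rw [if_pos hij]; exact le_self_add
  · calc c i * c j * μ (E i ∩ E j) ≤ c j * μ (E j) * c i := by
          rw [mul_comm (c i), mul_right_comm]; gcongr; exact inter_subset_right
      _ ≤ _ := by rw [if_pos hji]; exact le_add_self

open scoped Classical in
theorem lintegral_sq_sum_indicator_le (hE : ∀ i ∈ t, MeasurableSet (E i))
    (hlam : ∀ i ∈ t, ∀ j ∈ t, (E i ∩ E j).Nonempty → E i ⊆ E j ∨ E j ⊆ E i)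
    (hanc : ∀ i ∈ t, ∑ j ∈ t with E i ⊆ E j, c j ≤ K * c i) :
    ∫⁻ x, (∑ i ∈ t, (E i).indicator (fun _ => c i) x) ^ 2 ∂μ
      ≤ 2 * K * ∑ i ∈ t, c i ^ 2 * μ (E i) := by
  set b : ι → ι → ℝ≥0∞ := fun i j => if E i ⊆ E j then c i * μ (E i) * c j else 0
  have hb : ∑ i ∈ t, ∑ j ∈ t, b i j ≤ K * ∑ i ∈ t, c i ^ 2 * μ (E i) := by
    rw [Finset.mul_sum]
    refine Finset.sum_le_sum fun i hi => ?_
    calc ∑ j ∈ t, b i j = c i * μ (E i) * ∑ j ∈ t with E i ⊆ E j, c j := by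
          rw [Finset.mul_sum, Finset.sum_filter]
      _ ≤ c i * μ (E i) * (K * c i) := by gcongr; exact hanc i hi
      _ = K * (c i ^ 2 * μ (E i)) := by ring
  calc ∫⁻ x, (∑ i ∈ t, (E i).indicator (fun _ => c i) x) ^ 2 ∂μ
      = ∫⁻ x, ∑ i ∈ t, ∑ j ∈ t, (E i ∩ E j).indicator (fun _ => c i * c j) x ∂μ := by
        simp only [sq, Finset.sum_mul_sum, inter_indicator_mul]
    _ = ∑ i ∈ t, ∑ j ∈ t, c i * c j * μ (E i ∩ E j) := by
        rw [lintegral_finsetSum' t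
          (f := fun i x => ∑ j ∈ t, (E i ∩ E j).indicator (fun _ => c i * c j) x)
          fun i hi => Finset.aemeasurable_fun_sum _ fun j hj =>
            aemeasurable_const.indicator ((hE i hi).inter (hE j hj))]
        refine Finset.sum_congr rfl fun i hi => ?_
        rw [lintegral_finsetSum' _ fun j hj =>
          aemeasurable_const.indicator ((hE i hi).inter (hE j hj))]
        exact Finset.sum_congr rfl fun j hj =>
          lintegral_indicator_const ((hE i hi).inter (hE j hj)) _
    _ ≤ ∑ i ∈ t, ∑ j ∈ t, (b i j + b j i) :=
        Finset.sum_le_sum fun i hi => Finset.sum_le_sum fun j hj =>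
          mul_measure_inter_le_of_laminar i j (hlam i hi j hj)
    _ = ∑ i ∈ t, ∑ j ∈ t, b i j + ∑ i ∈ t, ∑ j ∈ t, b i j := by
        simp only [Finset.sum_add_distrib]; rw [Finset.sum_comm (f := fun i j => b j i)]
    _ ≤ 2 * K * ∑ i ∈ t, c i ^ 2 * μ (E i) := by
        rw [two_mul, add_mul]; exact add_le_add hb hb

open scoped Classical in
theorem sum_sq_mul_measure_le_of_laminar (hE : ∀ i ∈ t, MeasurableSet (E i))
    (hlam : ∀ i ∈ t, ∀ j ∈ t, (E i ∩ E j).Nonempty → E i ⊆ E j ∨ E j ⊆ E i)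
    (hanc : ∀ i ∈ t, ∑ j ∈ t with E i ⊆ E j, c j ≤ K * c i)
    (hc : ∀ i ∈ t, c i ≠ ∞) (hμ : ∀ i ∈ t, μ (E i) ≠ ∞) {g : α → ℝ≥0∞} (hg : AEMeasurable g μ)
    (havg : ∀ i ∈ t, c i * μ (E i) = ∫⁻ x in E i, g x ∂μ) :
    ∑ i ∈ t, c i ^ 2 * μ (E i) ≤ 2 * K * ∫⁻ x, g x ^ 2 ∂μ := by
  set H : α → ℝ≥0∞ := fun x => ∑ i ∈ t, (E i).indicator (fun _ => c i) x
  have hH : AEMeasurable H μ :=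
    Finset.aemeasurable_fun_sum _ fun i hi => aemeasurable_const.indicator (hE i hi)
  have hT : ∑ i ∈ t, c i ^ 2 * μ (E i) = ∫⁻ x, H x * g x ∂μ := by
    simp only [H, Finset.sum_mul, ← indicator_mul_left]
    rw [lintegral_finsetSum' t (f := fun i x => (E i).indicator (fun y => c i * g y) x)
      fun i hi => (aemeasurable_const.mul hg).indicator (hE i hi)]
    refine Finset.sum_congr rfl fun i hi => ?_
    rw [lintegral_indicator (hE i hi), lintegral_const_mul'' _ hg.restrict, ← havg i hi]
    ring
  refine ENNReal.le_mul_of_sq_le_mul ?_ ?_ (lintegral_sq_sum_indicator_le hE hlam hanc)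
  · exact ENNReal.sum_ne_top.2 fun i hi =>
      ENNReal.mul_ne_top (ENNReal.pow_ne_top (hc i hi)) (hμ i hi)
  · rw [hT]; exact ENNReal.sq_lintegral_mul_le hH hg

end Laminar

namespace TwoWeight

namespace DI

theorem mem_set_iff {I : DI} {x : ℝ} : x ∈ I.set ↔ ⌊x / 2 ^ I.k⌋ = I.n := by
  have h2k : (0 : ℝ) < 2 ^ I.k := zpow_pos two_pos _
  rw [Int.floor_eq_iff, le_div_iff₀ h2k, div_lt_iff₀ h2k, set, left, right, mem_Ico]
  constructor <;> rintro ⟨h₁, h₂⟩ <;> constructor <;> linarith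

theorem measurableSet (I : DI) : MeasurableSet I.set := measurableSet_Ico

theorem measure_ne_top (μ : Measure ℝ) [IsLocallyFiniteMeasure μ] (I : DI) : μ I.set ≠ ∞ :=
  measure_Ico_lt_top.ne

theorem left_lt_right (I : DI) : I.left < I.right := by
  rw [left, right]; nlinarith [zpow_pos (two_pos : (0 : ℝ) < 2) I.k]

theorem set_nonempty (I : DI) : I.set.Nonempty := nonempty_Ico.2 I.left_lt_right

theorem k_le_of_subset {I J : DI} (h : I.set ⊆ J.set) : I.k ≤ J.k := by
  obtain ⟨hl, hr⟩ := (Ico_subset_Ico_iff I.left_lt_right).1 h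
  have hlen : (2 : ℝ) ^ I.k ≤ 2 ^ J.k := by
    simp only [left, right] at hl hr; linarith
  exact (zpow_le_zpow_iff_right₀ one_lt_two).1 hlen

theorem eq_of_subset_of_k_eq {I J : DI} (h : I.set ⊆ J.set) (hk : I.k = J.k) : I = J := by
  obtain ⟨x, hx⟩ := I.set_nonempty
  have hn : I.n = J.n := by rw [← mem_set_iff.1 hx, ← mem_set_iff.1 (h hx), hk]
  cases I; cases J; simp_all

theorem set_injective : Function.Injective DI.set := fun _ _ h =>
  eq_of_subset_of_k_eq h.le (le_antisymm (k_le_of_subset h.le) (k_le_of_subset h.ge))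

theorem k_lt_of_ssubset {I J : DI} (h : I.set ⊂ J.set) : I.k < J.k :=
  (k_le_of_subset h.subset).lt_of_ne fun hk => h.ne (by rw [eq_of_subset_of_k_eq h.subset hk])

theorem floor_div_zpow_of_mem {I : DI} {x : ℝ} (hx : x ∈ I.set) {k : ℤ} (hk : I.k ≤ k) :
    ⌊x / 2 ^ k⌋ = I.n / 2 ^ (k - I.k).toNat := by
  have hpow : (2 : ℝ) ^ k = 2 ^ I.k * ((2 ^ (k - I.k).toNat : ℕ) : ℝ) := by
    rw [Nat.cast_pow, Nat.cast_ofNat, ← zpow_natCast, ← zpow_add₀ two_ne_zero]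
    congr 1; omega
  rw [hpow, ← div_div, Int.floor_div_natCast, mem_set_iff.1 hx]
  simp

theorem subset_of_mem_of_k_le {I J : DI} {x : ℝ} (hxI : x ∈ I.set) (hxJ : x ∈ J.set)
    (hk : I.k ≤ J.k) : I.set ⊆ J.set := fun y hy =>
  mem_set_iff.2 <| by rw [floor_div_zpow_of_mem hy hk, ← floor_div_zpow_of_mem hxI hk,
    mem_set_iff.1 hxJ]

theorem subset_or_subset_of_inter_nonempty {I J : DI} (h : (I.set ∩ J.set).Nonempty) :
    I.set ⊆ J.set ∨ J.set ⊆ I.set := by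
  obtain ⟨x, hxI, hxJ⟩ := h
  exact (le_total I.k J.k).imp (subset_of_mem_of_k_le hxI hxJ) (subset_of_mem_of_k_le hxJ hxI)

end DI

theorem avg_abs_nonneg (σ : Measure ℝ) (I : DI) (g : ℝ → ℝ) : 0 ≤ avg σ I (fun x => |g x|) :=
  mul_nonneg (inv_nonneg.2 ENNReal.toReal_nonneg) (integral_nonneg fun _ => abs_nonneg _)

theorem ofReal_avg_abs_mul_measure {σ : Measure ℝ} {I : DI} {g : ℝ → ℝ} (hI : σ I.set ≠ ∞)
    (hg : IntegrableOn g I.set σ) :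
    ENNReal.ofReal (avg σ I fun x => |g x|) * σ I.set
      = ∫⁻ x in I.set, ENNReal.ofReal |g x| ∂σ := by
  rcases eq_or_ne (σ I.set) 0 with h0 | h0
  · rw [h0, mul_zero, Measure.restrict_eq_zero.2 h0, lintegral_zero_measure]
  rw [← ofReal_integral_eq_lintegral_ofReal hg.abs (.of_forall fun _ => abs_nonneg _),
    ← ENNReal.ofReal_toReal hI, ← ENNReal.ofReal_mul (avg_abs_nonneg σ I g), avg,
    mul_comm, mul_inv_cancel_left₀ (ENNReal.toReal_ne_zero.2 ⟨h0, hI⟩)]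

namespace StopColl

variable {sg : Measure ℝ} {f : ℝ → ℝ} {I₀ : DI}

theorem self_mem : I₀ ∈ StopColl sg f I₀ :=
  ⟨0, fun _ => I₀, rfl, rfl, fun _ hi => absurd hi (Nat.not_lt_zero _)⟩

theorem subset {F : DI} (hF : F ∈ StopColl sg f I₀) : F.set ⊆ I₀.set := by
  obtain ⟨n, c, h0, rfl, hc⟩ := hF
  suffices ∀ i ≤ n, (c i).set ⊆ I₀.set from this n le_rfl
  intro i
  induction i with
  | zero => exact fun _ => h0 ▸ subset_rfl
  | succ i ih => exact fun hi => (hc i hi).1.subset.trans (ih (by omega))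

theorem exists_stopChild {F : DI} (hF : F ∈ StopColl sg f I₀) (hne : F ≠ I₀) :
    ∃ P ∈ StopColl sg f I₀, StopChild sg f P F := by
  obtain ⟨n, c, h0, rfl, hc⟩ := hF
  cases n with
  | zero => exact absurd h0 hne
  | succ m => exact ⟨c m, ⟨m, c, h0, rfl, fun i hi => hc i (by omega)⟩, hc m (by omega)⟩

theorem k_le {F : DI} (hF : F ∈ StopColl sg f I₀) : F.k ≤ I₀.k := DI.k_le_of_subset (subset hF)

/-- Recursing through the stopping parent `Q` of `G`, the new middle interval is `Q` or `P`,
both strictly larger than `G`; this is the termination measure. -/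
theorem not_ssubset_of_stopChild {P G F : DI} (hP : P ∈ StopColl sg f I₀)
    (hG : G ∈ StopColl sg f I₀) (hPF : StopChild sg f P F) (hFG : F.set ⊂ G.set) :
    ¬ G.set ⊂ P.set := by
  intro hGP
  obtain ⟨Q, hQ, hQG⟩ := exists_stopChild hG fun h => (hGP.trans_subset (subset hP)).ne (h ▸ rfl)
  have hkQ := DI.k_lt_of_ssubset hQG.1
  have hkP := DI.k_lt_of_ssubset hGP
  have hQ₀ := k_le hQ
  have hP₀ := k_le hP
  obtain ⟨x, hx⟩ := G.set_nonempty
  rcases eq_or_ne Q P with rfl | hQP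
  · exact hFG.ne (congrArg DI.set (hPF.2.2 G hFG.subset hGP hQG.2.1).symm)
  rcases DI.subset_or_subset_of_inter_nonempty ⟨x, hQG.1.subset hx, hGP.subset hx⟩ with h | h
  · exact not_ssubset_of_stopChild hP hQ hPF (hFG.trans hQG.1)
      (h.ssubset_of_ne fun h => hQP (DI.set_injective h))
  · exact not_ssubset_of_stopChild hQ hP hQG hGP
      (h.ssubset_of_ne fun h => hQP (DI.set_injective h.symm))
termination_by (I₀.k - G.k).toNat

theorem parent_subset_of_ssubset {P G F : DI} (hP : P ∈ StopColl sg f I₀)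
    (hG : G ∈ StopColl sg f I₀) (hPF : StopChild sg f P F) (hFG : F.set ⊂ G.set) :
    P.set ⊆ G.set := by
  obtain ⟨x, hx⟩ := F.set_nonempty
  rcases DI.subset_or_subset_of_inter_nonempty ⟨x, hPF.1.subset hx, hFG.subset hx⟩ with h | h
  · exact h
  · by_contra hPG
    exact not_ssubset_of_stopChild hP hG hPF hFG (h.ssubset_of_ne fun he => hPG he.ge)

open scoped Classical in
theorem sum_avg_abs_le (s : Finset (StopColl sg f I₀)) {F : DI} (hF : F ∈ StopColl sg f I₀) :
    ∑ G ∈ s with F.set ⊆ G.1.set, avg sg G.1 (fun x => |f x|)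
      ≤ 4 / 3 * avg sg F (fun x => |f x|) := by
  have hnonneg : ∀ G : StopColl sg f I₀, 0 ≤ avg sg G.1 (fun x => |f x|) :=
    fun G => avg_abs_nonneg sg G.1 f
  by_cases hF₀ : F = I₀
  · subst hF₀
    have hsub : {G ∈ s | F.set ⊆ G.1.set} ⊆ {⟨F, self_mem⟩} := fun G hG => by
      rw [Finset.mem_singleton]
      exact Subtype.ext (DI.set_injective ((subset G.2).antisymm (Finset.mem_filter.1 hG).2))
    calc ∑ G ∈ s with F.set ⊆ G.1.set, avg sg G.1 (fun x => |f x|)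
        ≤ avg sg F (fun x => |f x|) :=
          (Finset.sum_le_sum_of_subset_of_nonneg hsub fun G _ _ => hnonneg G).trans_eq
            (Finset.sum_singleton _ _)
      _ ≤ 4 / 3 * avg sg F (fun x => |f x|) := by linarith [hnonneg ⟨F, self_mem⟩]
  obtain ⟨P, hP, hPF⟩ := exists_stopChild hF hF₀
  have hkP := DI.k_lt_of_ssubset hPF.1
  have hP₀ := k_le hP
  have hsub : {G ∈ s | F.set ⊆ G.1.set} ⊆ insert ⟨F, hF⟩ {G ∈ s | P.set ⊆ G.1.set} :=
    fun G hG => by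
      obtain ⟨hGs, hFG⟩ := Finset.mem_filter.1 hG
      rcases hFG.eq_or_ssubset with he | hFG
      · exact Finset.mem_insert.2 (Or.inl (Subtype.ext (DI.set_injective he.symm)))
      · exact Finset.mem_insert_of_mem
          (Finset.mem_filter.2 ⟨hGs, parent_subset_of_ssubset hP G.2 hPF hFG⟩)
  have hF_notMem : (⟨F, hF⟩ : StopColl sg f I₀) ∉ {G ∈ s | P.set ⊆ G.1.set} :=
    fun h => hPF.1.not_subset (Finset.mem_filter.1 h).2
  calc ∑ G ∈ s with F.set ⊆ G.1.set, avg sg G.1 (fun x => |f x|)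
      ≤ avg sg F (fun x => |f x|) + ∑ G ∈ s with P.set ⊆ G.1.set, avg sg G.1 (fun x => |f x|) :=
        (Finset.sum_le_sum_of_subset_of_nonneg hsub fun G _ _ => hnonneg G).trans_eq
          (Finset.sum_insert hF_notMem)
    _ ≤ avg sg F (fun x => |f x|) + 4 / 3 * avg sg P (fun x => |f x|) := by
        gcongr; exact sum_avg_abs_le s hP
    _ ≤ 4 / 3 * avg sg F (fun x => |f x|) := by linarith [hPF.2.1]
termination_by (I₀.k - F.k).toNat

end StopColl

/-- quasi-orthogonality: `Σ_{F ∈ ℱ} (𝔼^σ_F |f|)² σ(F) ≤ C ‖f‖²_{L²(σ)}`. -/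
theorem statement15 :
    ∃ C : ℝ, 0 < C ∧
    ∀ (sg : Measure ℝ), IsLocallyFiniteMeasure sg →
    ∀ I₀ : DI, 0 < sg I₀.set →
    ∀ f : ℝ → ℝ, MemLp f 2 sg → Function.support f ⊆ I₀.set →
      ∑' F : StopColl sg f I₀,
          ENNReal.ofReal ((avg sg F.1 (fun x => |f x|)) ^ 2) * sg F.1.set
        ≤ ENNReal.ofReal C * ∫⁻ x, ENNReal.ofReal ((f x) ^ 2) ∂sg := by
  classical
  refine ⟨8 / 3, by norm_num, fun sg _ I₀ _ f hf _ => ?_⟩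
  set a : StopColl sg f I₀ → ℝ := fun F => avg sg F.1 fun x => |f x|
  have hint : ∀ I : DI, IntegrableOn f I.set sg := fun I =>
    ((hf.locallyIntegrable one_le_two).integrableOn_isCompact isCompact_Icc).mono_set
      Ico_subset_Icc_self
  rw [ENNReal.tsum_eq_iSup_sum]
  refine iSup_le fun s => ?_
  have hanc : ∀ F ∈ s, ∑ G ∈ s with F.1.set ⊆ G.1.set, ENNReal.ofReal (a G)
      ≤ ENNReal.ofReal (4 / 3) * ENNReal.ofReal (a F) := fun F _ => by
    rw [← ENNReal.ofReal_sum_of_nonneg fun G _ => avg_abs_nonneg sg G.1 f,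
      ← ENNReal.ofReal_mul (by norm_num)]
    exact ENNReal.ofReal_le_ofReal (StopColl.sum_avg_abs_le s F.2)
  calc ∑ F ∈ s, ENNReal.ofReal (a F ^ 2) * sg F.1.set
      = ∑ F ∈ s, ENNReal.ofReal (a F) ^ 2 * sg F.1.set := by
        simp only [ENNReal.ofReal_pow (avg_abs_nonneg sg _ f), a]
    _ ≤ 2 * ENNReal.ofReal (4 / 3) * ∫⁻ x, ENNReal.ofReal |f x| ^ 2 ∂sg :=
        sum_sq_mul_measure_le_of_laminar (fun F _ => F.1.measurableSet)
          (fun _ _ _ _ => DI.subset_or_subset_of_inter_nonempty) hanc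
          (fun _ _ => ENNReal.ofReal_ne_top) (fun F _ => F.1.measure_ne_top sg)
          hf.1.aemeasurable.abs.ennreal_ofReal
          (fun F _ => ofReal_avg_abs_mul_measure (F.1.measure_ne_top sg) (hint F.1))
    _ = ENNReal.ofReal (8 / 3) * ∫⁻ x, ENNReal.ofReal (f x ^ 2) ∂sg := by
        simp only [← ENNReal.ofReal_pow (abs_nonneg _), sq_abs]
        rw [← ENNReal.ofReal_ofNat 2, ← ENNReal.ofReal_mul (by norm_num)]
        norm_num

end TwoWeight
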